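/- Under the closed-loop error dynamics Q̇_E = Q_E V_E, Ṗ_E = ad*_{V_E} P_E − ad*_{Ad_{Q_d} u_d} P_E − R[V_E] − L*_{Q_E} dΥ(Q_E), with V_E = Ī_t⁻¹[P_E] and Ī_t = Ad*_{Q_d⁻¹} I Ad_{Q_d⁻¹}, the function L(Q_E, P_E, t) = ½⟨P_E, Ī_t⁻¹[P_E]⟩ + Υ(Q_E) satisfies L̇ = −R(V_E, V_E) along trajectories. -/

import Mathlib

/-!
STATEMENT 19: Under the closed-loop error dynamics
Q̇_E = Q_E V_E,
Ṗ_E = ad*_{V_E} P_E − ad*_{Ad_{Q_d} u_d} P_E − R[V_E] − L*_{Q_E} dΥ(Q_E),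
with V_E = Ī_t⁻¹[P_E] and Ī_t = Ad*_{Q_d⁻¹} ∘ I ∘ Ad_{Q_d⁻¹}, the function
L(Q_E, P_E, t) = ½⟨P_E, Ī_t⁻¹[P_E]⟩ + Υ(Q_E) satisfies
L̇ = −R(V_E, V_E) along trajectories.
Setting: G is the group of invertible n×n real matrices, g ≅ g* ≅ n×n
matrices via the trace pairing ⟨P,U⟩ = tr(Pᵀ U); ad*_V P = Vᵀ P − P Vᵀ,
Ad_Q V = Q V Q⁻¹, Ad*_Q P = Qᵀ P (Q⁻¹)ᵀ.  Q_d(t) is a smooth curve in G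
with Q̇_d = Q_d u_d.  I : g → g* is a constant positive-definite
self-adjoint inertia; Ī_t X = Ad*_{Q_d⁻¹}(I(Ad_{Q_d⁻¹} X)).  The
constraint V_E = Ī_t⁻¹[P_E] is expressed as Ī_t[V_E] = P_E, under which
½⟨P_E, Ī_t⁻¹[P_E]⟩ = ½⟨P_E, V_E⟩.  Υ is smooth with
⟨L*_Q dΥ(Q), U⟩ = ⟨dΥ(Q), QU⟩, and R is a positive-definite symmetric
bilinear form on g with R[V] ∈ g* and R(V,W) = ⟨R[V], W⟩.
-/

open Matrix

noncomputable section

attribute [local instance]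
  Matrix.linftyOpNormedAddCommGroup Matrix.linftyOpNormedSpace
  Matrix.linftyOpNormedRing Matrix.linftyOpNormedAlgebra

variable {n : ℕ}

/-- trace pairing between g* and g. -/
def pairg (P U : Matrix (Fin n) (Fin n) ℝ) : ℝ := (Pᵀ * U).trace

/-- `ad*_V P = Vᵀ P − P Vᵀ`. -/
def coad (V P : Matrix (Fin n) (Fin n) ℝ) : Matrix (Fin n) (Fin n) ℝ :=
  Vᵀ * P - P * Vᵀ

/-!
Writing `M = Q_d⁻¹ V_E Q_d` for the body velocity, the kinetic energy `½⟨P_E, V_E⟩` is also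
`½⟨I M, M⟩`. Differentiating both expressions and using that `I` is self-adjoint gives the power
identity `d/dt ½⟨P_E, V_E⟩ = ⟨Ṗ_E, V_E⟩ + ⟨ad*_{Ad_{Q_d} u_d} P_E, V_E⟩`. Along the closed loop the
`ad*_{Ad_{Q_d} u_d}` terms cancel, `⟨ad*_{V_E} P_E, V_E⟩ = 0`, and `⟨L*_{Q_E} dΥ, V_E⟩` is the
derivative of `Υ(Q_E)`, which leaves `-R(V_E, V_E)`.
-/

theorem HasDerivAt.linearMap_apply {E F : Type*} [NormedAddCommGroup E] [NormedSpace ℝ E]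
    [FiniteDimensional ℝ E] [NormedAddCommGroup F] [NormedSpace ℝ F] (L : E →ₗ[ℝ] F)
    {f : ℝ → E} {f' : E} {t : ℝ} (h : HasDerivAt f f' t) :
    HasDerivAt (fun s => L (f s)) (L f') t :=
  L.toContinuousLinearMap.hasFDerivAt.comp_hasDerivAt t h

theorem hasDerivAt_matrix_inv {m : Type*} [Fintype m] [DecidableEq m]
    {Q : ℝ → Matrix m m ℝ} {Q' : Matrix m m ℝ} {t : ℝ}
    (hQ : IsUnit (Q t)) (h : HasDerivAt Q Q' t) :
    HasDerivAt (fun s => (Q s)⁻¹) (-((Q t)⁻¹ * Q' * (Q t)⁻¹)) t := by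
  obtain ⟨u, hu⟩ := hQ
  have hinv := (hu ▸ hasFDerivAt_ringInverse (𝕜 := ℝ) u).comp_hasDerivAt t h
  have hfun : Ring.inverse ∘ Q = fun s => (Q s)⁻¹ := by
    funext s; simp [Matrix.nonsing_inv_eq_ringInverse]
  rw [hfun] at hinv
  refine hinv.congr_deriv ?_
  simp [← hu, Matrix.coe_units_inv]

section Pairing

variable (X Y Z B : Matrix (Fin n) (Fin n) ℝ)

theorem pairg_sub_left : pairg (X - Y) Z = pairg X Z - pairg Y Z := by
  simp [pairg, Matrix.sub_mul]

theorem pairg_add_right : pairg X (Y + Z) = pairg X Y + pairg X Z := by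
  simp [pairg, Matrix.mul_add]

theorem pairg_sub_right : pairg X (Y - Z) = pairg X Y - pairg X Z := by
  simp [pairg, Matrix.mul_sub]

theorem pairg_transpose_mul : pairg (Bᵀ * X) Y = pairg X (B * Y) := by
  simp only [pairg, Matrix.transpose_mul, Matrix.transpose_transpose, Matrix.mul_assoc]

theorem pairg_mul_transpose : pairg (X * Bᵀ) Y = pairg X (Y * B) := by
  simp only [pairg, Matrix.transpose_mul, Matrix.transpose_transpose, Matrix.mul_assoc]
  rw [Matrix.trace_mul_comm, Matrix.mul_assoc]

theorem pairg_transpose_mul_mul_transpose : pairg (Bᵀ * X * Zᵀ) Y = pairg X (B * Y * Z) := by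
  rw [pairg_mul_transpose, pairg_transpose_mul, Matrix.mul_assoc]

theorem pairg_coad : pairg (coad Y X) Z = pairg X (Y * Z - Z * Y) := by
  rw [coad, pairg_sub_left, pairg_transpose_mul, pairg_mul_transpose, pairg_sub_right]

theorem pairg_coad_self : pairg (coad Y X) Y = 0 := by
  rw [pairg_coad, sub_self, pairg, Matrix.mul_zero, Matrix.trace_zero]

end Pairing

theorem hasDerivAt_pairg {P V : ℝ → Matrix (Fin n) (Fin n) ℝ} {P' V' : Matrix (Fin n) (Fin n) ℝ}
    {t : ℝ} (hP : HasDerivAt P P' t) (hV : HasDerivAt V V' t) :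
    HasDerivAt (fun s => pairg (P s) (V s)) (pairg P' (V t) + pairg (P t) V') t := by
  have hPt := hP.linearMap_apply (Matrix.transposeLinearEquiv (Fin n) (Fin n) ℝ ℝ).toLinearMap
  have h := (hPt.mul hV).linearMap_apply (Matrix.traceLinearMap (Fin n) ℝ ℝ)
  simpa [pairg, Matrix.trace_add] using h

section Inertia

variable {Q V P : ℝ → Matrix (Fin n) (Fin n) ℝ} {u V' P' : Matrix (Fin n) (Fin n) ℝ} {t : ℝ}

theorem hasDerivAt_inv_mul_mul (hQ : IsUnit (Q t)) (hQ' : HasDerivAt Q (Q t * u) t)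
    (hV : HasDerivAt V V' t) :
    HasDerivAt (fun s => (Q s)⁻¹ * V s * Q s)
      ((Q t)⁻¹ * V' * Q t + ((Q t)⁻¹ * V t * Q t * u - u * ((Q t)⁻¹ * V t * Q t))) t := by
  have hAQ : (Q t)⁻¹ * Q t = 1 := Matrix.nonsing_inv_mul _ ((Matrix.isUnit_iff_isUnit_det _).mp hQ)
  have hA : HasDerivAt (fun s => (Q s)⁻¹) (-(u * (Q t)⁻¹)) t := by
    convert hasDerivAt_matrix_inv hQ hQ' using 2
    rw [← Matrix.mul_assoc, hAQ, Matrix.one_mul]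
  refine ((hA.mul hV).mul hQ').congr_deriv ?_
  simp only [Pi.mul_apply]
  noncomm_ring

theorem hasDerivAt_half_pairg_apply_self {M : ℝ → Matrix (Fin n) (Fin n) ℝ}
    {M' : Matrix (Fin n) (Fin n) ℝ} (I : Matrix (Fin n) (Fin n) ℝ →ₗ[ℝ] Matrix (Fin n) (Fin n) ℝ)
    (hIsym : ∀ X Y, pairg (I X) Y = pairg (I Y) X) (hM : HasDerivAt M M' t) :
    HasDerivAt (fun s => (1 / 2 : ℝ) * pairg (I (M s)) (M s)) (pairg (I (M t)) M') t := by
  refine ((hasDerivAt_pairg (hM.linearMap_apply I) hM).const_mul (1 / 2 : ℝ)).congr_deriv ?_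
  rw [hIsym]
  ring

theorem hasDerivAt_half_pairg_of_inertia
    (I : Matrix (Fin n) (Fin n) ℝ →ₗ[ℝ] Matrix (Fin n) (Fin n) ℝ)
    (hIsym : ∀ X Y, pairg (I X) Y = pairg (I Y) X)
    (hQ : IsUnit (Q t)) (hQ' : HasDerivAt Q (Q t * u) t)
    (hP : ∀ s, ((Q s)⁻¹)ᵀ * I ((Q s)⁻¹ * V s * Q s) * (Q s)ᵀ = P s)
    (hP' : HasDerivAt P P' t) (hV : HasDerivAt V V' t) :
    HasDerivAt (fun s => (1 / 2 : ℝ) * pairg (P s) (V s))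
      (pairg P' (V t) + pairg (coad (Q t * u * (Q t)⁻¹) (P t)) (V t)) t := by
  have hAQ : (Q t)⁻¹ * Q t = 1 := Matrix.nonsing_inv_mul _ ((Matrix.isUnit_iff_isUnit_det _).mp hQ)
  have hPt := hP t
  have hM := hasDerivAt_inv_mul_mul hQ hQ' hV
  set A := (Q t)⁻¹
  set M := A * V t * Q t
  have hspatial := (hasDerivAt_pairg hP' hV).const_mul (1 / 2 : ℝ)
  have hbody : HasDerivAt (fun s => (1 / 2 : ℝ) * pairg (P s) (V s))
      (pairg (I M) (A * V' * Q t + (M * u - u * M))) t := by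
    simp only [← hP, pairg_transpose_mul_mul_transpose]
    exact hasDerivAt_half_pairg_apply_self I hIsym hM
  have hPV' : pairg (P t) V' = pairg (I M) (A * V' * Q t) := by
    rw [← hPt, pairg_transpose_mul_mul_transpose]
  have hcoad : pairg (coad (Q t * u * A) (P t)) (V t) = pairg (I M) (u * M - M * u) := by
    have hAQ' : ∀ X, A * (Q t * X) = X := fun X => by rw [← Matrix.mul_assoc, hAQ, Matrix.one_mul]
    rw [pairg_coad, ← hPt, pairg_transpose_mul_mul_transpose]
    simp only [M, Matrix.mul_sub, Matrix.sub_mul, Matrix.mul_assoc, hAQ, hAQ', Matrix.mul_one]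
  have hframes := hbody.unique hspatial
  rw [pairg_add_right, pairg_sub_right, ← hPV'] at hframes
  rw [pairg_sub_right] at hcoad
  exact hspatial.congr_deriv (by linarith)

end Inertia

theorem statement19_general (n : ℕ)
    -- the desired configuration curve, Q̇_d = Q_d u_d
    (Qd ud : ℝ → Matrix (Fin n) (Fin n) ℝ)
    (hQdunit : ∀ t, IsUnit (Qd t))
    (hQddyn : ∀ t, HasDerivAt Qd (Qd t * ud t) t)
    -- constant positive-definite self-adjoint inertia I : g → g*
    (I : Matrix (Fin n) (Fin n) ℝ →ₗ[ℝ] Matrix (Fin n) (Fin n) ℝ)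
    (hIsym : ∀ X Y, pairg (I X) Y = pairg (I Y) X)
    -- error trajectory
    (QE PE VE : ℝ → Matrix (Fin n) (Fin n) ℝ)
    -- velocity constraint V_E = Ī_t⁻¹[P_E], i.e. Ī_t[V_E] = P_E, where
    -- Ī_t X = Ad*_{Q_d⁻¹}(I(Ad_{Q_d⁻¹} X))
    (hVE : ∀ t, ((Qd t)⁻¹)ᵀ * (I ((Qd t)⁻¹ * VE t * Qd t)) * (Qd t)ᵀ = PE t)
    (hVEdiff : Differentiable ℝ VE)
    -- potential Υ and its left-trivialised differential DU along Q_E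
    (Υ : Matrix (Fin n) (Fin n) ℝ → ℝ) (hΥ : Differentiable ℝ Υ)
    (DU : ℝ → Matrix (Fin n) (Fin n) ℝ)
    (hDU : ∀ t X, pairg (DU t) X = fderiv ℝ Υ (QE t) (QE t * X))
    -- Rayleigh dissipation: positive-definite symmetric bilinear form
    (Rb : Matrix (Fin n) (Fin n) ℝ →ₗ[ℝ] Matrix (Fin n) (Fin n) ℝ)
    -- closed-loop error dynamics
    (hQEdyn : ∀ t, HasDerivAt QE (QE t * VE t) t)
    (hPEdyn : ∀ t, HasDerivAt PE
      (coad (VE t) (PE t) - coad (Qd t * ud t * (Qd t)⁻¹) (PE t)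
        - Rb (VE t) - DU t) t) :
    ∀ t, HasDerivAt (fun s => (1 / 2 : ℝ) * pairg (PE s) (VE s) + Υ (QE s))
      (-(pairg (Rb (VE t)) (VE t))) t := by
  intro t
  have hkinetic := hasDerivAt_half_pairg_of_inertia I hIsym (hQdunit t) (hQddyn t) hVE
    (hPEdyn t) (hVEdiff t).hasDerivAt
  have hpotential : HasDerivAt (fun s => Υ (QE s)) (pairg (DU t) (VE t)) t := by
    rw [hDU]
    exact (hΥ (QE t)).hasFDerivAt.comp_hasDerivAt t (hQEdyn t)
  refine (hkinetic.add hpotential).congr_deriv ?_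
  simp only [pairg_sub_left, pairg_coad_self]
  ring

theorem statement19 (n : ℕ)
    -- the desired configuration curve, Q̇_d = Q_d u_d
    (Qd ud : ℝ → Matrix (Fin n) (Fin n) ℝ)
    (hQdunit : ∀ t, IsUnit (Qd t))
    (hQddyn : ∀ t, HasDerivAt Qd (Qd t * ud t) t)
    -- constant positive-definite self-adjoint inertia I : g → g*
    (I : Matrix (Fin n) (Fin n) ℝ →ₗ[ℝ] Matrix (Fin n) (Fin n) ℝ)
    (hIsym : ∀ X Y, pairg (I X) Y = pairg (I Y) X)
    (hIpos : ∀ X, X ≠ 0 → 0 < pairg (I X) X)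
    -- error trajectory
    (QE PE VE : ℝ → Matrix (Fin n) (Fin n) ℝ)
    (hQEunit : ∀ t, IsUnit (QE t))
    -- velocity constraint V_E = Ī_t⁻¹[P_E], i.e. Ī_t[V_E] = P_E, where
    -- Ī_t X = Ad*_{Q_d⁻¹}(I(Ad_{Q_d⁻¹} X))
    (hVE : ∀ t, ((Qd t)⁻¹)ᵀ * (I ((Qd t)⁻¹ * VE t * Qd t)) * (Qd t)ᵀ = PE t)
    (hVEdiff : Differentiable ℝ VE)
    -- potential Υ and its left-trivialised differential DU along Q_E
    (Υ : Matrix (Fin n) (Fin n) ℝ → ℝ) (hΥ : Differentiable ℝ Υ)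
    (DU : ℝ → Matrix (Fin n) (Fin n) ℝ)
    (hDU : ∀ t X, pairg (DU t) X = fderiv ℝ Υ (QE t) (QE t * X))
    -- Rayleigh dissipation: positive-definite symmetric bilinear form
    (Rb : Matrix (Fin n) (Fin n) ℝ →ₗ[ℝ] Matrix (Fin n) (Fin n) ℝ)
    (hRsym : ∀ X Y, pairg (Rb X) Y = pairg (Rb Y) X)
    (hRpos : ∀ X, X ≠ 0 → 0 < pairg (Rb X) X)
    -- closed-loop error dynamics
    (hQEdyn : ∀ t, HasDerivAt QE (QE t * VE t) t)
    (hPEdyn : ∀ t, HasDerivAt PE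
      (coad (VE t) (PE t) - coad (Qd t * ud t * (Qd t)⁻¹) (PE t)
        - Rb (VE t) - DU t) t) :
    ∀ t, HasDerivAt (fun s => (1 / 2 : ℝ) * pairg (PE s) (VE s) + Υ (QE s))
      (-(pairg (Rb (VE t)) (VE t))) t :=
  statement19_general n Qd ud hQdunit hQddyn I hIsym QE PE VE hVE hVEdiff Υ hΥ DU hDU Rb hQEdyn
    hPEdyn
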